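/- In ℝ^3, the segment from (0,0,0) to (1,2,2) and the segment from (0,1,2) to (2,2,1) are disjoint and their Euclidean distance equals 1/(5√2). -/

import Mathlib

/-- Points of ℝ^3 as elements of Euclidean space. -/
noncomputable def pt3 (x y z : ℝ) : EuclideanSpace ℝ (Fin 3) := WithLp.toLp 2 ![x, y, z]

/-!
Parametrise the two segments as `p t = t • (1,2,2)` and `q s = (0,1,2) + s • (2,1,-1)`.
Completing the square gives
`‖p t - q s‖² = (9t - 2s - 6)² / 9 + (50s - 21)² / 450 + 1/50`,
so the two lines are at distance `√(1/50) = 1/(5√2)`, attained only at `s = 21/50`, `t = 19/25`.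
Both parameters lie in `[0, 1]`, so the segments realise the distance of their lines; as it is
positive, they are disjoint.
-/

lemma pt3_add (a b c x y z : ℝ) : pt3 a b c + pt3 x y z = pt3 (a + x) (b + y) (c + z) := by
  ext i; fin_cases i <;> rfl

lemma smul_pt3 (r x y z : ℝ) : r • pt3 x y z = pt3 (r * x) (r * y) (r * z) := by
  ext i; fin_cases i <;> rfl

lemma dist_pt3_sq (a b c x y z : ℝ) :
    dist (pt3 a b c) (pt3 x y z) ^ 2 = (a - x) ^ 2 + (b - y) ^ 2 + (c - z) ^ 2 := by
  rw [EuclideanSpace.dist_eq, Real.sq_sqrt (by positivity), Fin.sum_univ_three]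
  simp [pt3, Real.dist_eq, sq_abs]

lemma dist_sq_segment_params (t s : ℝ) :
    dist ((1 - t) • pt3 0 0 0 + t • pt3 1 2 2) ((1 - s) • pt3 0 1 2 + s • pt3 2 2 1) ^ 2 =
      (9 * t - 2 * s - 6) ^ 2 / 9 + (50 * s - 21) ^ 2 / 450 + 1 / 50 := by
  simp only [smul_pt3, pt3_add, dist_pt3_sq]
  ring

lemma one_div_five_mul_sqrt_two_sq : (1 / (5 * √2)) ^ 2 = 1 / 50 := by
  rw [div_pow, mul_pow, Real.sq_sqrt zero_le_two]
  norm_num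

lemma one_div_five_mul_sqrt_two_le_dist {p q : EuclideanSpace ℝ (Fin 3)}
    (hp : p ∈ segment ℝ (pt3 0 0 0) (pt3 1 2 2)) (hq : q ∈ segment ℝ (pt3 0 1 2) (pt3 2 2 1)) :
    1 / (5 * √2) ≤ dist p q := by
  rw [segment_eq_image] at hp hq
  obtain ⟨t, -, rfl⟩ := hp
  obtain ⟨s, -, rfl⟩ := hq
  rw [← pow_le_pow_iff_left₀ (by positivity) dist_nonneg two_ne_zero,
    one_div_five_mul_sqrt_two_sq, dist_sq_segment_params]
  exact le_add_of_nonneg_left (by positivity)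

lemma dist_eq_one_div_five_mul_sqrt_two :
    dist ((1 - 19 / 25 : ℝ) • pt3 0 0 0 + (19 / 25 : ℝ) • pt3 1 2 2)
      ((1 - 21 / 50 : ℝ) • pt3 0 1 2 + (21 / 50 : ℝ) • pt3 2 2 1) = 1 / (5 * √2) := by
  rw [← pow_left_inj₀ dist_nonneg (by positivity) two_ne_zero,
    one_div_five_mul_sqrt_two_sq, dist_sq_segment_params]
  norm_num

/-- In ℝ^3, the segment from (0,0,0) to (1,2,2) and the segment from
(0,1,2) to (2,2,1) are disjoint and their Euclidean distance equals 1/(5√2). -/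
theorem stmt_18 :
    let P := segment ℝ (pt3 0 0 0) (pt3 1 2 2)
    let Q := segment ℝ (pt3 0 1 2) (pt3 2 2 1)
    P ∩ Q = ∅ ∧ sInf (Set.image2 dist P Q) = 1 / (5 * Real.sqrt 2) := by
  intro P Q
  have hattained : 1 / (5 * √2) ∈ Set.image2 dist P Q := by
    rw [← dist_eq_one_div_five_mul_sqrt_two]
    exact Set.mem_image2_of_mem ⟨_, _, by norm_num, by norm_num, by norm_num, rfl⟩
      ⟨_, _, by norm_num, by norm_num, by norm_num, rfl⟩
  have hleast : IsLeast (Set.image2 dist P Q) (1 / (5 * √2)) := by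
    refine ⟨hattained, ?_⟩
    rintro _ ⟨p, hp, q, hq, rfl⟩
    exact one_div_five_mul_sqrt_two_le_dist hp hq
  refine ⟨Set.eq_empty_iff_forall_notMem.2 fun x ⟨hxP, hxQ⟩ => ?_, hleast.csInf_eq⟩
  exact (one_div_five_mul_sqrt_two_le_dist hxP hxQ).not_gt (by rw [dist_self]; positivity)
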